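/- arXiv:1901.01360 — 2 statements merged into one kernel-verified Lean document; each statement's English description precedes it below -/
import Mathlib

section
/- For i ∈ I = {1,…,m}, let F_i = {f_{ij}}_{j∈J} be a sequence in a separable Hilbert space H. The following are equivalent: (i) the family {F_i}_{i∈I} is woven, i.e., there exist universal constants A, B > 0 such that for every partition {σ_i}_{i∈I} of J the family {f_{ij}}_{j∈σ_i, i∈I} is a frame for H with bounds A, B; (ii) there exists A > 0 such that for every partition {σ_i}_{i∈I} of J there is a bounded linear operator T : ⊕_{i∈I} ℓ²(σ_i) → H with T(u_{ij}) = f_{ij} for all j ∈ σ_i, i ∈ I, and A·I_H ≤ T T*, where {u_{ij}}_{j∈σ_i, i∈I} is the standard orthonormal basis of ⊕_{i∈I} ℓ²(σ_i). -/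
/-!
A family `g : ι → E` is Bessel exactly when some bounded `T : ℓ²(ι) → E` sends the standard basis
to `g`: one direction takes `T` to be the adjoint of the analysis operator `x ↦ (⟪g i, x⟫)ᵢ`, the
other reads off that `T* x` has coordinates `⟪g i, x⟫`. In that situation
`re ⟪T T* x, x⟫ = ‖T* x‖² = ∑ |⟪x, g i⟫|²`, so the lower frame bound of a weaving is precisely a
lower bound for `T T*`. The uniform upper bound comes from the partitions that give all of `J` to a
single `i`: they make every `F_i` Bessel, with some bound `Cᵢ`, and then every weaving is Bessel
with bound `∑ Cᵢ`.
-/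

open Function Set
open scoped InnerProductSpace InnerProduct lp

theorem lp.hasSum_norm_sq {ι : Type*} {G : ι → Type*} [∀ i, NormedAddCommGroup (G i)]
    (f : lp G 2) : HasSum (fun i => ‖f i‖ ^ 2) (‖f‖ ^ 2) := by
  simpa using lp.hasSum_norm (p := 2) (by norm_num) f

theorem hasSum_sigma_fintype_iff_of_nonneg {β : Type*} [Fintype β] {κ : β → Type*}
    {h : (Σ b, κ b) → ℝ} (hh : ∀ p, 0 ≤ h p) {a : ℝ} :
    HasSum h a ↔ (∀ b, Summable fun c => h ⟨b, c⟩) ∧ ∑ b, ∑' c, h ⟨b, c⟩ = a := by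
  constructor
  · intro hsum
    have hcomp := ((summable_sigma_of_nonneg hh).1 hsum.summable).1
    refine ⟨hcomp, ?_⟩
    rw [← hsum.tsum_eq, hsum.summable.tsum_sigma' hcomp, tsum_fintype]
  · rintro ⟨hcomp, rfl⟩
    refine (hasSum_fintype _).sigma_of_hasSum (fun b => (hcomp b).hasSum) ?_
    exact (summable_sigma_of_nonneg hh).2 ⟨hcomp, .of_finite⟩

variable {𝕜 ι κ J E F : Type*} [RCLike 𝕜] [NormedAddCommGroup E] [InnerProductSpace 𝕜 E]

theorem ContinuousLinearMap.re_inner_map_adjoint_self [CompleteSpace E] [NormedAddCommGroup F]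
    [InnerProductSpace 𝕜 F] [CompleteSpace F] (T : F →L[𝕜] E) (x : E) :
    RCLike.re ⟪T ((T†) x), x⟫_𝕜 = ‖(T†) x‖ ^ 2 := by
  simpa using ((T†).apply_norm_sq_eq_inner_adjoint_left x).symm

variable (𝕜) in
def IsBessel (g : ι → E) (B : ℝ) : Prop :=
  ∀ x : E, Summable (fun i => ‖⟪x, g i⟫_𝕜‖ ^ 2) ∧ ∑' i, ‖⟪x, g i⟫_𝕜‖ ^ 2 ≤ B * ‖x‖ ^ 2

namespace IsBessel

variable {g : ι → E} {B : ℝ}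

theorem comp_injective (hg : IsBessel 𝕜 g B) {e : κ → ι} (he : Injective e) :
    IsBessel 𝕜 (g ∘ e) B := by
  intro x
  have hsum : Summable fun k => ‖⟪x, g (e k)⟫_𝕜‖ ^ 2 := (hg x).1.comp_injective he
  refine ⟨hsum, le_trans ?_ (hg x).2⟩
  exact hsum.tsum_le_tsum_of_inj e he (fun _ _ => sq_nonneg _) (fun _ => le_rfl) (hg x).1

theorem memℓp_inner (hg : IsBessel 𝕜 g B) (x : E) : Memℓp (fun i => ⟪g i, x⟫_𝕜) 2 :=
  memℓp_gen <| by simpa [norm_inner_symm] using (hg x).1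

noncomputable def analysis (hg : IsBessel 𝕜 g B) : E →L[𝕜] ℓ²(ι, 𝕜) :=
  LinearMap.mkContinuous
    { toFun := fun x => ⟨_, hg.memℓp_inner x⟩
      map_add' := fun x y => by ext; simp [inner_add_right]; rfl
      map_smul' := fun c x => by ext; simp [inner_smul_right] }
    √B fun x => by
      set y : ℓ²(ι, 𝕜) := ⟨_, hg.memℓp_inner x⟩
      have hy : ‖y‖ ^ 2 ≤ B * ‖x‖ ^ 2 := by
        rw [← (lp.hasSum_norm_sq y).tsum_eq]
        simpa [y, norm_inner_symm] using (hg x).2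
      calc ‖y‖ ≤ √(B * ‖x‖ ^ 2) := Real.le_sqrt_of_sq_le hy
        _ = √B * ‖x‖ := by rw [Real.sqrt_mul' _ (sq_nonneg _), Real.sqrt_sq (norm_nonneg _)]

theorem analysis_apply (hg : IsBessel 𝕜 g B) (x : E) (i : ι) :
    hg.analysis x i = ⟪g i, x⟫_𝕜 := rfl

end IsBessel

section Synthesis

variable [CompleteSpace E] [DecidableEq ι] {g : ι → E}

theorem ContinuousLinearMap.adjoint_apply_eq_inner_of_map_single {T : ℓ²(ι, 𝕜) →L[𝕜] E}
    (hT : ∀ i, T (lp.single 2 i 1) = g i) (x : E) (i : ι) : (T†) x i = ⟪g i, x⟫_𝕜 := by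
  simpa [hT, ContinuousLinearMap.adjoint_inner_right] using
    (lp.inner_single_left (𝕜 := 𝕜) i (1 : 𝕜) ((T†) x)).symm

theorem ContinuousLinearMap.hasSum_norm_inner_sq_of_map_single {T : ℓ²(ι, 𝕜) →L[𝕜] E}
    (hT : ∀ i, T (lp.single 2 i 1) = g i) (x : E) :
    HasSum (fun i => ‖⟪x, g i⟫_𝕜‖ ^ 2) (‖(T†) x‖ ^ 2) := by
  simpa [T.adjoint_apply_eq_inner_of_map_single hT, norm_inner_symm] using
    lp.hasSum_norm_sq ((T†) x)

theorem ContinuousLinearMap.isBessel_of_map_single {T : ℓ²(ι, 𝕜) →L[𝕜] E}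
    (hT : ∀ i, T (lp.single 2 i 1) = g i) : IsBessel 𝕜 g (‖T‖ ^ 2) := fun x => by
  have hsum := T.hasSum_norm_inner_sq_of_map_single hT x
  refine ⟨hsum.summable, hsum.tsum_eq ▸ ?_⟩
  calc ‖(T†) x‖ ^ 2 ≤ (‖T†‖ * ‖x‖) ^ 2 := by gcongr; exact (T†).le_opNorm x
    _ = ‖T‖ ^ 2 * ‖x‖ ^ 2 := by rw [ContinuousLinearMap.adjoint.norm_map, mul_pow]

theorem IsBessel.exists_map_single {B : ℝ} (hg : IsBessel 𝕜 g B) :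
    ∃ T : ℓ²(ι, 𝕜) →L[𝕜] E, ∀ i, T (lp.single 2 i 1) = g i := by
  refine ⟨hg.analysis†, fun i => ext_inner_right 𝕜 fun x => ?_⟩
  simp [ContinuousLinearMap.adjoint_inner_left, lp.inner_single_left, hg.analysis_apply]

end Synthesis

theorem exists_isBessel_of_forall_partition [CompleteSpace E] [DecidableEq ι] [DecidableEq J]
    (f : ι → J → E)
    (h : ∀ σ : ι → Set J, Pairwise (Disjoint on σ) → ⋃ i, σ i = univ →
      ∃ T : ℓ²((i : ι) × σ i, 𝕜) →L[𝕜] E, ∀ p, T (lp.single 2 p 1) = f p.1 p.2) (i : ι) :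
    ∃ B, IsBessel 𝕜 (f i) B := by
  -- the partition that gives all of `J` to `i`
  obtain ⟨T, hT⟩ := h (fun k => {_j | k = i})
    (fun k l hkl => disjoint_left.2 fun _ hk hl => hkl (hk.trans hl.symm))
    (eq_univ_of_forall fun _ => mem_iUnion.2 ⟨i, rfl⟩)
  refine ⟨_, (T.isBessel_of_map_single hT).comp_injective (e := fun j => ⟨i, j, rfl⟩) ?_⟩
  intro a b hab
  simpa using hab

local notation "⟪" x ", " y "⟫" => @inner ℂ _ _ x y

theorem woven_iff_operator_general
    {H : Type} [NormedAddCommGroup H] [InnerProductSpace ℂ H] [CompleteSpace H]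
    {J : Type} [DecidableEq J] {m : ℕ}
    (f : Fin m → J → H) :
    (∃ A B : ℝ, 0 < A ∧ 0 < B ∧
      ∀ σ : Fin m → Set J, Pairwise (Function.onFun Disjoint σ) →
        (⋃ i, σ i) = Set.univ →
        (∀ i (x : H), Summable fun j : σ i => ‖⟪x, f i (j : J)⟫‖ ^ 2) ∧
        ∀ x : H,
          A * ‖x‖ ^ 2 ≤ ∑ i, ∑' j : σ i, ‖⟪x, f i (j : J)⟫‖ ^ 2 ∧
          ∑ i, ∑' j : σ i, ‖⟪x, f i (j : J)⟫‖ ^ 2 ≤ B * ‖x‖ ^ 2)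
    ↔ (∃ A : ℝ, 0 < A ∧
        ∀ σ : Fin m → Set J, Pairwise (Function.onFun Disjoint σ) →
          (⋃ i, σ i) = Set.univ →
          ∃ T : lp (fun _ : ((i : Fin m) × σ i) => ℂ) 2 →L[ℂ] H,
            (∀ p : (i : Fin m) × σ i, T (lp.single 2 p 1) = f p.1 (p.2 : J)) ∧
            ∀ x : H, A * ‖x‖ ^ 2 ≤ (⟪T (ContinuousLinearMap.adjoint T x), x⟫).re) := by
  constructor
  · rintro ⟨A, B, hA, -, hwoven⟩
    refine ⟨A, hA, fun σ hdisj hcover => ?_⟩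
    obtain ⟨hsumm, hbounds⟩ := hwoven σ hdisj hcover
    have hweave (x : H) : HasSum (fun p : (i : Fin m) × σ i => ‖⟪x, f p.1 p.2⟫‖ ^ 2)
        (∑ i, ∑' j : σ i, ‖⟪x, f i j⟫‖ ^ 2) :=
      (hasSum_sigma_fintype_iff_of_nonneg fun _ => sq_nonneg _).2 ⟨(hsumm · x), rfl⟩
    have hbessel : IsBessel ℂ (fun p : (i : Fin m) × σ i => f p.1 p.2) B := fun x =>
      ⟨(hweave x).summable, (hweave x).tsum_eq ▸ (hbounds x).2⟩
    obtain ⟨T, hT⟩ := hbessel.exists_map_single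
    refine ⟨T, hT, fun x => ?_⟩
    rw [← RCLike.re_to_complex, T.re_inner_map_adjoint_self,
      (T.hasSum_norm_inner_sq_of_map_single hT x).unique (hweave x)]
    exact (hbounds x).1
  · rintro ⟨A, hA, hop⟩
    choose C hC using exists_isBessel_of_forall_partition f
      fun σ hdisj hcover => (hop σ hdisj hcover).imp fun _ => And.left
    refine ⟨A, max (∑ i, C i) 1, hA, lt_max_of_lt_right one_pos, fun σ hdisj hcover => ?_⟩
    have hrow (i : Fin m) : IsBessel ℂ (fun j : σ i => f i j) (C i) :=
      (hC i).comp_injective Subtype.val_injective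
    refine ⟨fun i x => (hrow i x).1, fun x => ⟨?_, ?_⟩⟩
    · obtain ⟨T, hT, hlower⟩ := hop σ hdisj hcover
      obtain ⟨-, hsum⟩ := (hasSum_sigma_fintype_iff_of_nonneg fun _ => sq_nonneg _).1
        (T.hasSum_norm_inner_sq_of_map_single hT x)
      rw [hsum, ← T.re_inner_map_adjoint_self, RCLike.re_to_complex]
      exact hlower x
    · calc ∑ i, ∑' j : σ i, ‖⟪x, f i j⟫‖ ^ 2 ≤ ∑ i, C i * ‖x‖ ^ 2 :=
            Finset.sum_le_sum fun i _ => (hrow i x).2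
        _ = (∑ i, C i) * ‖x‖ ^ 2 := (Finset.sum_mul ..).symm
        _ ≤ max (∑ i, C i) 1 * ‖x‖ ^ 2 :=
            mul_le_mul_of_nonneg_right (le_max_left _ _) (sq_nonneg _)

theorem woven_iff_operator
    {H : Type} [NormedAddCommGroup H] [InnerProductSpace ℂ H] [CompleteSpace H]
    [TopologicalSpace.SeparableSpace H]
    {J : Type} [Countable J] [DecidableEq J] {m : ℕ}
    (f : Fin m → J → H) :
    (∃ A B : ℝ, 0 < A ∧ 0 < B ∧
      ∀ σ : Fin m → Set J, Pairwise (Function.onFun Disjoint σ) →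
        (⋃ i, σ i) = Set.univ →
        (∀ i (x : H), Summable fun j : σ i => ‖⟪x, f i (j : J)⟫‖ ^ 2) ∧
        ∀ x : H,
          A * ‖x‖ ^ 2 ≤ ∑ i, ∑' j : σ i, ‖⟪x, f i (j : J)⟫‖ ^ 2 ∧
          ∑ i, ∑' j : σ i, ‖⟪x, f i (j : J)⟫‖ ^ 2 ≤ B * ‖x‖ ^ 2)
    ↔ (∃ A : ℝ, 0 < A ∧
        ∀ σ : Fin m → Set J, Pairwise (Function.onFun Disjoint σ) →
          (⋃ i, σ i) = Set.univ →
          ∃ T : lp (fun _ : ((i : Fin m) × σ i) => ℂ) 2 →L[ℂ] H,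
            (∀ p : (i : Fin m) × σ i, T (lp.single 2 p 1) = f p.1 (p.2 : J)) ∧
            ∀ x : H, A * ‖x‖ ^ 2 ≤ (⟪T (ContinuousLinearMap.adjoint T x), x⟫).re) :=
  woven_iff_operator_general f
end

section
/- For i ∈ I = {1,…,m}, let F_i = {f_{ij}}_{j∈J} be a frame for a separable Hilbert space H with bounds A_i, B_i. Fix k ∈ I and suppose that for every σ ⊂ J and every i ≠ k, the bounded linear operator P_i^σ defined by P_i^σ(f) = Σ_{j∈σ} ⟨f, f_{ij}⟩ f_{ij} − Σ_{j∈σ} ⟨f, f_{kj}⟩ f_{kj} is positive (i.e., ⟨P_i^σ(f), f⟩ ≥ 0 for all f ∈ H). Then the family of frames {F_i}_{i∈I} is woven: for every partition {σ_i}_{i∈I} of J and all f ∈ H, A_k‖f‖² ≤ Σ_{i∈I} Σ_{j∈σ_i} |⟨f, f_{ij}⟩|² ≤ (Σ_{i∈I} B_i)‖f‖². -/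
/-!
Expanding the quadratic form of `P_i^σ` turns its positivity at `x` into
`∑_{j∈σ} |⟨x, f_kj⟩|² ≤ ∑_{j∈σ} |⟨x, f_ij⟩|²`. Applied to each piece `σ_i` of a partition and
summed, the weaving dominates the full frame sum of `F_k`, hence the lower bound `A_k`; the upper
bound holds piece by piece. Expanding the quadratic form requires the series
`∑ ⟨f_ij, x⟩ f_ij` to converge, which follows in a complete space from the Bessel bound through
the dual estimate `‖∑ c_j g_j‖² ≤ C ∑ |c_j|²`.
-/

local notation "⟪" x ", " y "⟫" => @inner ℂ _ _ x y

open scoped InnerProductSpace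

section Bessel

variable {𝕜 H ι : Type*} [RCLike 𝕜] [NormedAddCommGroup H] [InnerProductSpace 𝕜 H]

theorem norm_sum_smul_sq_le_of_bessel {g : ι → H} {C : ℝ} (hC : 0 ≤ C) {t : Finset ι}
    (hB : ∀ y : H, ∑ j ∈ t, ‖⟪y, g j⟫_𝕜‖ ^ 2 ≤ C * ‖y‖ ^ 2) (c : ι → 𝕜) :
    ‖∑ j ∈ t, c j • g j‖ ^ 2 ≤ C * ∑ j ∈ t, ‖c j‖ ^ 2 := by
  set S := ∑ j ∈ t, c j • g j
  have hS : ‖S‖ ^ 2 ≤ ∑ j ∈ t, ‖c j‖ * ‖⟪S, g j⟫_𝕜‖ := by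
    rw [← inner_self_eq_norm_sq (𝕜 := 𝕜), sum_inner, map_sum]
    refine Finset.sum_le_sum fun j _ => ?_
    rw [inner_smul_left, norm_inner_symm, ← RCLike.norm_conj (c j), ← norm_mul]
    exact RCLike.re_le_norm _
  have hS_sq : ‖S‖ ^ 2 * ‖S‖ ^ 2 ≤ (C * ∑ j ∈ t, ‖c j‖ ^ 2) * ‖S‖ ^ 2 := calc
    ‖S‖ ^ 2 * ‖S‖ ^ 2 ≤ (∑ j ∈ t, ‖c j‖ * ‖⟪S, g j⟫_𝕜‖) ^ 2 := by
      rw [← sq]; exact pow_le_pow_left₀ (by positivity) hS 2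
    _ ≤ (∑ j ∈ t, ‖c j‖ ^ 2) * ∑ j ∈ t, ‖⟪S, g j⟫_𝕜‖ ^ 2 := Finset.sum_mul_sq_le_sq_mul_sq _ _ _
    _ ≤ (∑ j ∈ t, ‖c j‖ ^ 2) * (C * ‖S‖ ^ 2) := by gcongr; exact hB S
    _ = (C * ∑ j ∈ t, ‖c j‖ ^ 2) * ‖S‖ ^ 2 := by ring
  rcases (sq_nonneg ‖S‖).eq_or_lt with h0 | hpos
  · rw [← h0]; positivity
  · exact le_of_mul_le_mul_right hS_sq hpos

theorem summable_smul_of_bessel [CompleteSpace H] {g : ι → H} {C : ℝ} (hC : 0 ≤ C)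
    (hB : ∀ (y : H) (t : Finset ι), ∑ j ∈ t, ‖⟪y, g j⟫_𝕜‖ ^ 2 ≤ C * ‖y‖ ^ 2) {c : ι → 𝕜}
    (hc : Summable fun j => ‖c j‖ ^ 2) : Summable fun j => c j • g j := by
  rw [summable_iff_vanishing_norm]
  intro ε hε
  obtain ⟨s, hs⟩ := summable_iff_vanishing_norm.mp hc (ε ^ 2 / (C + 1)) (by positivity)
  refine ⟨s, fun t ht => ?_⟩
  have hct : ∑ j ∈ t, ‖c j‖ ^ 2 < ε ^ 2 / (C + 1) :=
    (Real.le_norm_self _).trans_lt (hs t ht)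
  have : ‖∑ j ∈ t, c j • g j‖ ^ 2 < ε ^ 2 := calc
    _ ≤ C * ∑ j ∈ t, ‖c j‖ ^ 2 := norm_sum_smul_sq_le_of_bessel hC (hB · t) c
    _ ≤ C * (ε ^ 2 / (C + 1)) := by gcongr
    _ < ε ^ 2 := by rw [mul_div_assoc', div_lt_iff₀ (by positivity)]; nlinarith
  exact (pow_lt_pow_iff_left₀ (norm_nonneg _) hε.le two_ne_zero).mp this

theorem re_inner_tsum_inner_smul_self {g : ι → H} {x : H}
    (hs : Summable fun j => ⟪g j, x⟫_𝕜 • g j) :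
    RCLike.re ⟪∑' j, ⟪g j, x⟫_𝕜 • g j, x⟫_𝕜 = ∑' j, ‖⟪x, g j⟫_𝕜‖ ^ 2 := by
  have h := RCLike.hasSum_re 𝕜 (hs.hasSum.mapL (innerSL 𝕜 x))
  rw [inner_re_symm]
  refine (h.congr_fun fun j => ?_).tsum_eq.symm
  rw [innerSL_apply_apply, inner_smul_right, ← inner_conj_symm x (g j), RCLike.norm_conj,
    RCLike.mul_conj]
  norm_cast

theorem summable_inner_smul_of_bessel [CompleteSpace H] {g : ι → H} {C : ℝ}
    (hg : ∀ y : H, Summable fun j => ‖⟪y, g j⟫_𝕜‖ ^ 2)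
    (hB : ∀ y : H, ∑' j, ‖⟪y, g j⟫_𝕜‖ ^ 2 ≤ C * ‖y‖ ^ 2) (x : H) :
    Summable fun j => ⟪g j, x⟫_𝕜 • g j := by
  have hB' (y : H) (t : Finset ι) : ∑ j ∈ t, ‖⟪y, g j⟫_𝕜‖ ^ 2 ≤ max C 0 * ‖y‖ ^ 2 :=
    calc _ ≤ ∑' j, ‖⟪y, g j⟫_𝕜‖ ^ 2 := (hg y).sum_le_tsum t fun _ _ => by positivity
      _ ≤ C * ‖y‖ ^ 2 := hB y
      _ ≤ max C 0 * ‖y‖ ^ 2 := by gcongr; exact le_max_left _ _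
  refine summable_smul_of_bessel (le_max_right C 0) hB' ?_
  simpa only [norm_inner_symm] using hg x

end Bessel

theorem tsum_eq_sum_tsum_of_pairwise_disjoint {α κ ι : Type*} [AddCommGroup α] [UniformSpace α]
    [IsUniformAddGroup α] [CompleteSpace α] [T2Space α] [Fintype κ] {G : ι → α} (hG : Summable G)
    {σ : κ → Set ι} (hdisj : Pairwise (Function.onFun Disjoint σ)) (hcover : ⋃ i, σ i = Set.univ) :
    ∑' j, G j = ∑ i, ∑' j : σ i, G j := by
  rw [← Summable.tsum_finset_bUnion_disjoint (f := G) (fun i _ j _ hij => hdisj hij)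
    (fun i _ => hG.subtype _), show ⋃ i ∈ Finset.univ, σ i = Set.univ by simpa using hcover,
    tsum_univ]

theorem positive_difference_implies_woven_general
    {H : Type} [NormedAddCommGroup H] [InnerProductSpace ℂ H] [CompleteSpace H]
    {J : Type} {m : ℕ}
    (f : Fin m → J → H) (A B : Fin m → ℝ)
    (hSummable : ∀ i (x : H), Summable fun j : J => ‖⟪x, f i j⟫‖ ^ 2)
    (hframe : ∀ i (x : H),
      A i * ‖x‖ ^ 2 ≤ ∑' j : J, ‖⟪x, f i j⟫‖ ^ 2 ∧
      ∑' j : J, ‖⟪x, f i j⟫‖ ^ 2 ≤ B i * ‖x‖ ^ 2)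
    (k : Fin m)
    (hpos : ∀ σ : Set J, ∀ i, i ≠ k → ∀ x : H,
      0 ≤ (⟪(∑' j : σ, ⟪f i (j : J), x⟫ • f i (j : J))
              - ∑' j : σ, ⟪f k (j : J), x⟫ • f k (j : J), x⟫).re) :
    ∀ σ : Fin m → Set J, Pairwise (Function.onFun Disjoint σ) →
      (⋃ i, σ i) = Set.univ →
      ∀ x : H,
        A k * ‖x‖ ^ 2 ≤ ∑ i, ∑' j : σ i, ‖⟪x, f i (j : J)⟫‖ ^ 2 ∧
        ∑ i, ∑' j : σ i, ‖⟪x, f i (j : J)⟫‖ ^ 2 ≤ (∑ i, B i) * ‖x‖ ^ 2 := by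
  intro σ hdisj hcover x
  have hsyn (i : Fin m) : Summable fun j => ⟪f i j, x⟫ • f i j :=
    summable_inner_smul_of_bessel (hSummable i) (fun y => (hframe i y).2) x
  have hcomp (i : Fin m) :
      ∑' j : σ i, ‖⟪x, f k j⟫‖ ^ 2 ≤ ∑' j : σ i, ‖⟪x, f i j⟫‖ ^ 2 := by
    rcases eq_or_ne i k with rfl | hik
    · exact le_rfl
    have hp := hpos (σ i) i hik x
    rw [inner_sub_left, Complex.sub_re, ← RCLike.re_to_complex, ← RCLike.re_to_complex,
      re_inner_tsum_inner_smul_self ((hsyn i).subtype _),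
      re_inner_tsum_inner_smul_self ((hsyn k).subtype _)] at hp
    exact sub_nonneg.mp hp
  constructor
  · calc A k * ‖x‖ ^ 2 ≤ ∑' j, ‖⟪x, f k j⟫‖ ^ 2 := (hframe k x).1
      _ = ∑ i, ∑' j : σ i, ‖⟪x, f k j⟫‖ ^ 2 :=
        tsum_eq_sum_tsum_of_pairwise_disjoint (hSummable k x) hdisj hcover
      _ ≤ _ := Finset.sum_le_sum fun i _ => hcomp i
  · calc _ ≤ ∑ i, B i * ‖x‖ ^ 2 := Finset.sum_le_sum fun i _ =>
          ((hSummable i x).tsum_subtype_le _ (σ i) fun _ => by positivity).trans (hframe i x).2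
      _ = (∑ i, B i) * ‖x‖ ^ 2 := (Finset.sum_mul _ _ _).symm

theorem positive_difference_implies_woven
    {H : Type} [NormedAddCommGroup H] [InnerProductSpace ℂ H] [CompleteSpace H]
    [TopologicalSpace.SeparableSpace H]
    {J : Type} [Countable J] {m : ℕ}
    (f : Fin m → J → H) (A B : Fin m → ℝ) (hA : ∀ i, 0 < A i)
    (hSummable : ∀ i (x : H), Summable fun j : J => ‖⟪x, f i j⟫‖ ^ 2)
    (hframe : ∀ i (x : H),
      A i * ‖x‖ ^ 2 ≤ ∑' j : J, ‖⟪x, f i j⟫‖ ^ 2 ∧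
      ∑' j : J, ‖⟪x, f i j⟫‖ ^ 2 ≤ B i * ‖x‖ ^ 2)
    (k : Fin m)
    (hpos : ∀ σ : Set J, ∀ i, i ≠ k → ∀ x : H,
      0 ≤ (⟪(∑' j : σ, ⟪f i (j : J), x⟫ • f i (j : J))
              - ∑' j : σ, ⟪f k (j : J), x⟫ • f k (j : J), x⟫).re) :
    ∀ σ : Fin m → Set J, Pairwise (Function.onFun Disjoint σ) →
      (⋃ i, σ i) = Set.univ →
      ∀ x : H,
        A k * ‖x‖ ^ 2 ≤ ∑ i, ∑' j : σ i, ‖⟪x, f i (j : J)⟫‖ ^ 2 ∧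
        ∑ i, ∑' j : σ i, ‖⟪x, f i (j : J)⟫‖ ^ 2 ≤ (∑ i, B i) * ‖x‖ ^ 2 :=
  positive_difference_implies_woven_general f A B hSummable hframe k hpos
end
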